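/- arXiv:2510.18265 — 4 statements merged into one kernel-verified Lean document; each statement's English description precedes it below -/
import Mathlib

section
/- For 1 < m ≤ n, the m-degree of the Cartesian product S_n □ S_m equals m + 2. -/
open SimpleGraph

/-- The star graph with a central vertex `0` and `n` leaves. -/
def starGraph (n : ℕ) : SimpleGraph (Fin (n+1)) where
  Adj u v := u ≠ v ∧ (u = 0 ∨ v = 0)
  symm := by
    constructor
    intro u v h
    exact ⟨h.1.symm, h.2.symm⟩
  loopless := by
    constructor
    intro u h
    exact h.1 rfl

/-- A proper coloring with `k` colors which is a b-coloring: every color class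
contains a vertex adjacent to at least one vertex of every other color class. -/
def IsBColoring {V : Type*} (G : SimpleGraph V) (k : ℕ) (c : V → Fin k) : Prop :=
  (∀ u v, G.Adj u v → c u ≠ c v) ∧
    ∀ i : Fin k, ∃ v, c v = i ∧ ∀ j : Fin k, j ≠ i → ∃ u, G.Adj v u ∧ c u = j

/-- `G` admits a b-coloring with `k` colors. -/
def HasBColoring {V : Type*} (G : SimpleGraph V) (k : ℕ) : Prop :=
  ∃ c : V → Fin k, IsBColoring G k c

/-- The set of `k` such that `G` has a b-coloring with `k` colors.  The
b-chromatic number of `G` is the greatest element of this set. -/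
def bChromaticSet {V : Type*} (G : SimpleGraph V) : Set ℕ :=
  {k | HasBColoring G k}

/-- The set of `i` such that `G` has at least `i` vertices of degree at least `i - 1`.
The m-degree of `G` is the greatest element of this set. -/
def mDegreeSet {V : Type*} (G : SimpleGraph V) : Set ℕ :=
  {i | ∃ S : Set V, S.Finite ∧ S.ncard = i ∧ ∀ v ∈ S, i - 1 ≤ (G.neighborSet v).ncard}

/-- The line graph of `G`: vertices are the edges of `G`, two being adjacent iff
they are distinct and share an endpoint. -/
def lineGraph {V : Type*} (G : SimpleGraph V) : SimpleGraph G.edgeSet where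
  Adj e f := e ≠ f ∧ ∃ v, v ∈ (e : Sym2 V) ∧ v ∈ (f : Sym2 V)
  symm := by
    constructor
    rintro e f ⟨hne, v, hv1, hv2⟩
    exact ⟨hne.symm, v, hv2, hv1⟩
  loopless := by
    constructor
    rintro e ⟨hne, -⟩
    exact hne rfl

/-- The total graph of `G`: vertices are `V(G) ⊕ E(G)`; adjacency is vertex
adjacency, vertex-edge incidence, or edge adjacency. -/
def totalGraph {V : Type*} (G : SimpleGraph V) : SimpleGraph (V ⊕ G.edgeSet) where
  Adj x y :=
    match x, y with
    | .inl u, .inl v => G.Adj u v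
    | .inl u, .inr e => u ∈ (e : Sym2 V)
    | .inr e, .inl u => u ∈ (e : Sym2 V)
    | .inr e, .inr f => e ≠ f ∧ ∃ v, v ∈ (e : Sym2 V) ∧ v ∈ (f : Sym2 V)
  symm := by
    constructor
    rintro (u | e) (v | f) h
    · exact h.symm
    · exact h
    · exact h
    · exact ⟨h.1.symm, h.2.choose, h.2.choose_spec.2, h.2.choose_spec.1⟩
  loopless := by
    constructor
    rintro (u | e) h
    · exact G.loopless.irrefl u h
    · exact h.1 rfl

/-- The `p`-th power of `G`: same vertices, `u ~ v` iff `0 < d(u,v) ≤ p`. -/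
def graphPower {V : Type*} (G : SimpleGraph V) (p : ℕ) : SimpleGraph V where
  Adj u v := 0 < G.dist u v ∧ G.dist u v ≤ p
  symm := by
    constructor
    intro u v h
    rwa [SimpleGraph.dist_comm]
  loopless := by
    constructor
    intro u h
    simp [SimpleGraph.dist_self] at h

/-!
In `S_n □ S_m` the degree of `(a, b)` is `deg a + deg b`. The `m + 1` vertices `(0, b)` have
degree at least `n + 1 ≥ m + 1`, and a leaf `(a, 0)` has degree `m + 1`: that makes `m + 2`
vertices of degree at least `m + 1`. Conversely every vertex `(a, b)` with `a ≠ 0` has degree at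
most `m + 1`, so `m + 3` vertices of degree at least `m + 2` would all have to lie among the
`m + 1` vertices `(0, b)`.
-/

namespace SimpleGraph

section mDegree

variable {V : Type*} (G : SimpleGraph V) [G.LocallyFinite]

lemma ncard_neighborSet_eq_degree (v : V) : (G.neighborSet v).ncard = G.degree v := by
  rw [← coe_neighborFinset, Set.ncard_coe_finset, card_neighborFinset_eq_degree]

lemma card_mem_mDegreeSet (S : Finset V) (hS : ∀ v ∈ S, S.card - 1 ≤ G.degree v) :
    S.card ∈ mDegreeSet G :=
  ⟨S, S.finite_toSet, Set.ncard_coe_finset S, fun v hv => by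
    rw [ncard_neighborSet_eq_degree]
    exact hS v hv⟩

lemma le_of_mem_mDegreeSet {d i : ℕ} (T : Finset V) (hT : ∀ v, d ≤ G.degree v → v ∈ T)
    (hcard : T.card ≤ d) (hi : i ∈ mDegreeSet G) : i ≤ d := by
  by_contra! hlt
  obtain ⟨S, -, rfl, hS⟩ := hi
  have hST : S ⊆ T := fun v hv => hT v <| by
    have := hS v hv
    rw [ncard_neighborSet_eq_degree] at this
    omega
  have := Set.ncard_le_ncard hST T.finite_toSet
  rw [Set.ncard_coe_finset] at this
  omega

end mDegree

section star

variable {V W : Type*} [Fintype V] [DecidableEq V] [Fintype W] [DecidableEq W]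

lemma one_le_degree_starGraph {r : V} (hV : 2 ≤ Fintype.card V) (v : V) :
    1 ≤ (starGraph r).degree v := by
  rcases eq_or_ne v r with rfl | hv
  · rw [degree_starGraph_center]
    omega
  · rw [degree_starGraph_of_ne_center hv]

lemma degree_boxProd_starGraph_of_ne_center {r : V} {s : W} {x : V × W} (hx : x.1 ≠ r) :
    (starGraph r □ starGraph s).degree x ≤ Fintype.card W := by
  rw [degree_boxProd, degree_starGraph_of_ne_center hx]
  have := (starGraph s).degree_lt_card_verts x.2
  omega

lemma card_add_one_mem_mDegreeSet_boxProd_starGraph (r : V) (s : W)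
    (hW : 2 ≤ Fintype.card W) (hWV : Fintype.card W ≤ Fintype.card V) :
    Fintype.card W + 1 ∈ mDegreeSet (starGraph r □ starGraph s) := by
  obtain ⟨v, hv⟩ := Fintype.exists_ne_of_one_lt_card (by omega) r
  have hvs : (v, s) ∉ ({r} ×ˢ Finset.univ : Finset (V × W)) := by
    simpa only [Finset.mem_product, Finset.mem_singleton, Finset.mem_univ, and_true]
  have hcard : (({r} ×ˢ Finset.univ).cons (v, s) hvs).card = Fintype.card W + 1 := by
    rw [Finset.card_cons, Finset.card_product, Finset.card_singleton, one_mul, Finset.card_univ]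
  rw [← hcard]
  refine card_mem_mDegreeSet _ _ fun x hx => ?_
  rw [hcard, Nat.add_sub_cancel, degree_boxProd]
  rcases Finset.mem_cons.mp hx with rfl | hx
  · rw [degree_starGraph_of_ne_center hv, degree_starGraph_center]
    omega
  · rw [Finset.mem_singleton.mp (Finset.mem_product.mp hx).1, degree_starGraph_center]
    have := one_le_degree_starGraph hW x.2 (r := s)
    omega

lemma le_card_add_one_of_mem_mDegreeSet_boxProd_starGraph (r : V) (s : W) {i : ℕ}
    (hi : i ∈ mDegreeSet (starGraph r □ starGraph s)) : i ≤ Fintype.card W + 1 := by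
  refine le_of_mem_mDegreeSet _ ({r} ×ˢ Finset.univ) (fun x hx => ?_) (by simp) hi
  by_contra hxT
  have hx1 : x.1 ≠ r := fun h => hxT (Finset.mem_product.mpr ⟨by simp [h], Finset.mem_univ _⟩)
  have := degree_boxProd_starGraph_of_ne_center (s := s) hx1
  omega

theorem isGreatest_mDegreeSet_boxProd_starGraph (r : V) (s : W)
    (hW : 2 ≤ Fintype.card W) (hWV : Fintype.card W ≤ Fintype.card V) :
    IsGreatest (mDegreeSet (starGraph r □ starGraph s)) (Fintype.card W + 1) :=
  ⟨card_add_one_mem_mDegreeSet_boxProd_starGraph r s hW hWV,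
    fun _ => le_card_add_one_of_mem_mDegreeSet_boxProd_starGraph r s⟩

end star

end SimpleGraph

lemma starGraph_eq_starGraph_zero (n : ℕ) : _root_.starGraph n = SimpleGraph.starGraph 0 := by
  ext u v
  rw [SimpleGraph.starGraph_adj]
  rfl

theorem mDegree_boxProd_star (n m : ℕ) (hm : 1 < m) (hmn : m ≤ n) :
    IsGreatest (mDegreeSet ((_root_.starGraph n).boxProd (_root_.starGraph m))) (m + 2) := by
  rw [starGraph_eq_starGraph_zero, starGraph_eq_starGraph_zero]
  simpa using isGreatest_mDegreeSet_boxProd_starGraph (0 : Fin (n + 1)) (0 : Fin (m + 1))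
    (by rw [Fintype.card_fin]; omega) (by rw [Fintype.card_fin, Fintype.card_fin]; omega)
end

section
/- For n ≥ m ≥ 3 with n ≤ 2(m−1), the m-degree of the total graph T(S_n □ S_m) equals 2n + 3. -/
open SimpleGraph

/-!
In a total graph `T(G)` a vertex `v` has degree `2 deg v` and an edge `uv` has degree
`deg u + deg v`. In `S_n □ S_m` with `m ≤ n` the hub `(0, 0)` has degree `n + m` and every other
vertex has degree at most `n + 1`, so the only elements of `T(S_n □ S_m)` of degree at least
`2n + 3` are the hub and its `n + m` incident edges: too few for the m-degree to exceed `2n + 3`.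
Conversely the `m + 1` vertices `(0, b)` and the `n + m` edges at the hub all have degree at least
`2n + 2`, and `n ≤ 2(m - 1)` is exactly what makes these `n + 2m + 1` elements at least `2n + 3`.
-/

namespace SimpleGraph

variable {V W : Type*} (G : SimpleGraph V)

def edgesAt (v : V) : Set G.edgeSet := {e | v ∈ (e : Sym2 V)}

@[simp]
lemma mem_edgesAt {v : V} {e : G.edgeSet} : e ∈ G.edgesAt v ↔ v ∈ (e : Sym2 V) := Iff.rfl

lemma ncard_edgesAt (v : V) : (G.edgesAt v).ncard = (G.neighborSet v).ncard := by
  classical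
  have himage : Subtype.val '' G.edgesAt v = G.incidenceSet v := by
    ext e
    simp [incidenceSet, and_comm]
  rw [← Set.ncard_image_of_injective _ Subtype.val_injective, himage, ← Nat.card_coe_set_eq,
    ← Nat.card_coe_set_eq]
  exact Nat.card_congr (G.incidenceSetEquivNeighborSet v)

lemma totalGraph_neighborSet_inl (v : V) :
    (totalGraph G).neighborSet (.inl v) =
      .inl '' G.neighborSet v ∪ .inr '' G.edgesAt v := by
  ext (w | e) <;> simp [totalGraph]

lemma ncard_neighborSet_totalGraph_inl [Finite V] (v : V) :
    ((totalGraph G).neighborSet (.inl v)).ncard = 2 * (G.neighborSet v).ncard := by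
  rw [totalGraph_neighborSet_inl, Set.ncard_union_eq Set.disjoint_image_inl_image_inr,
    Set.ncard_image_of_injective _ Sum.inl_injective,
    Set.ncard_image_of_injective _ Sum.inr_injective, ncard_edgesAt]
  ring

lemma totalGraph_neighborSet_inr {u v : V} (h : G.Adj u v) :
    (totalGraph G).neighborSet (.inr ⟨s(u, v), h⟩) =
      .inl '' {u, v} ∪ .inr '' ((G.edgesAt u ∪ G.edgesAt v) \ {⟨s(u, v), h⟩}) := by
  ext (w | e)
  · simp [totalGraph]
  · simp [totalGraph, ne_comm, and_comm]

lemma ncard_neighborSet_totalGraph_inr [Finite V] {u v : V} (h : G.Adj u v) :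
    ((totalGraph G).neighborSet (.inr ⟨s(u, v), h⟩)).ncard =
      (G.neighborSet u).ncard + (G.neighborSet v).ncard := by
  rw [totalGraph_neighborSet_inr, Set.ncard_union_eq Set.disjoint_image_inl_image_inr,
    Set.ncard_image_of_injective _ Sum.inl_injective,
    Set.ncard_image_of_injective _ Sum.inr_injective, Set.ncard_pair h.ne]
  have hinter : G.edgesAt u ∩ G.edgesAt v = {⟨s(u, v), h⟩} := by
    ext e
    simp [Subtype.ext_iff, Sym2.mem_and_mem_iff h.ne]
  have hunion := Set.ncard_union_add_ncard_inter (G.edgesAt u) (G.edgesAt v)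
  rw [hinter, Set.ncard_singleton, ncard_edgesAt, ncard_edgesAt] at hunion
  have hdiff := Set.ncard_sdiff_singleton_add_one
    (show ⟨s(u, v), h⟩ ∈ G.edgesAt u ∪ G.edgesAt v by simp)
  omega

lemma ncard_neighborSet_boxProd (H : SimpleGraph W) [Finite V] [Finite W] (x : V × W) :
    ((G □ H).neighborSet x).ncard =
      (G.neighborSet x.1).ncard + (H.neighborSet x.2).ncard := by
  rw [neighborSet_boxProd, Set.ncard_union_eq, Set.ncard_prod, Set.ncard_prod]
  · simp
  · exact Set.disjoint_prod.2 (.inl (by simp))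

end SimpleGraph

lemma mem_mDegreeSet_of_le_ncard {V : Type*} {G : SimpleGraph V} {S : Set V} {k : ℕ}
    (hS : S.Finite) (hk : k ≤ S.ncard) (hdeg : ∀ v ∈ S, k - 1 ≤ (G.neighborSet v).ncard) :
    k ∈ mDegreeSet G := by
  obtain ⟨T, hTS, hT⟩ := Set.exists_subset_card_eq hk
  exact ⟨T, hS.subset hTS, hT, fun v hv => hdeg v (hTS hv)⟩

lemma le_ncard_of_mem_mDegreeSet {V : Type*} {G : SimpleGraph V} {T : Set V} {k : ℕ}
    (hT : T.Finite) (hk : k ∈ mDegreeSet G)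
    (hdeg : ∀ v, k - 1 ≤ (G.neighborSet v).ncard → v ∈ T) : k ≤ T.ncard := by
  obtain ⟨S, -, rfl, hS⟩ := hk
  exact Set.ncard_le_ncard (fun v hv => hdeg v (hS v hv)) hT

lemma neighborSet_starGraph_zero (n : ℕ) : (_root_.starGraph n).neighborSet 0 = {0}ᶜ := by
  ext a
  simp [_root_.starGraph, eq_comm]

lemma neighborSet_starGraph_of_ne_zero {n : ℕ} {a : Fin (n + 1)} (ha : a ≠ 0) :
    (_root_.starGraph n).neighborSet a = {0} := by
  ext b
  simp only [mem_neighborSet, _root_.starGraph, ha, false_or, Set.mem_singleton_iff]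
  exact ⟨And.right, fun hb => ⟨hb ▸ ha, hb⟩⟩

lemma ncard_neighborSet_starGraph (n : ℕ) (a : Fin (n + 1)) :
    ((_root_.starGraph n).neighborSet a).ncard = if a = 0 then n else 1 := by
  split_ifs with ha
  · rw [ha, neighborSet_starGraph_zero, Set.ncard_compl]
    simp
  · rw [neighborSet_starGraph_of_ne_zero ha, Set.ncard_singleton]

abbrev starBox (n m : ℕ) : SimpleGraph (Fin (n + 1) × Fin (m + 1)) :=
  _root_.starGraph n □ _root_.starGraph m

section StarBox

variable {n m : ℕ}

lemma ncard_neighborSet_starBox (x : Fin (n + 1) × Fin (m + 1)) :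
    ((starBox n m).neighborSet x).ncard =
      (if x.1 = 0 then n else 1) + (if x.2 = 0 then m else 1) := by
  rw [ncard_neighborSet_boxProd, ncard_neighborSet_starGraph, ncard_neighborSet_starGraph]

lemma ncard_neighborSet_starBox_le (hn : 1 ≤ n) (hmn : m ≤ n) {x : Fin (n + 1) × Fin (m + 1)}
    (hx : x ≠ (0, 0)) : ((starBox n m).neighborSet x).ncard ≤ n + 1 := by
  rw [ncard_neighborSet_starBox]
  split_ifs with ha hb <;> first | exact absurd (Prod.ext ha hb) hx | omega

-- One endpoint of such an edge is a leaf in both coordinates, hence has degree 2.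
lemma ncard_neighborSet_starBox_add_le (hmn : m ≤ n) {x y : Fin (n + 1) × Fin (m + 1)}
    (hxy : (starBox n m).Adj x y) (hx : x ≠ (0, 0)) (hy : y ≠ (0, 0)) :
    ((starBox n m).neighborSet x).ncard + ((starBox n m).neighborSet y).ncard ≤ n + 3 := by
  rw [ncard_neighborSet_starBox, ncard_neighborSet_starBox]
  obtain ⟨a, b⟩ := x
  obtain ⟨c, d⟩ := y
  simp only [boxProd_adj, _root_.starGraph] at hxy
  simp only [ne_eq, Prod.mk.injEq] at hx hy
  split_ifs <;> grind

lemma le_ncard_neighborSet_totalGraph_starBox_inl (hm : 1 ≤ m) (b : Fin (m + 1)) :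
    2 * n + 2 ≤ ((totalGraph (starBox n m)).neighborSet (.inl (0, b))).ncard := by
  rw [ncard_neighborSet_totalGraph_inl, ncard_neighborSet_starBox, if_pos rfl]
  split_ifs <;> omega

-- The other endpoint of such an edge has degree `m + 1` or `n + 1`.
lemma le_ncard_neighborSet_totalGraph_starBox_inr (hmn : m ≤ n) {e : (starBox n m).edgeSet}
    (he : e ∈ (starBox n m).edgesAt (0, 0)) :
    n + 2 * m + 1 ≤ ((totalGraph (starBox n m)).neighborSet (.inr e)).ncard := by
  obtain ⟨z, hz⟩ := e
  obtain ⟨y, rfl⟩ := Sym2.mem_iff_exists.1 he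
  rw [ncard_neighborSet_totalGraph_inr _ hz, ncard_neighborSet_starBox, ncard_neighborSet_starBox]
  simp only [mem_edgeSet, boxProd_adj, _root_.starGraph] at hz
  split_ifs <;> grind

lemma mem_of_le_ncard_neighborSet_totalGraph_starBox (hn : 1 ≤ n) (hmn : m ≤ n)
    {z : (Fin (n + 1) × Fin (m + 1)) ⊕ (starBox n m).edgeSet}
    (hz : 2 * n + 3 ≤ ((totalGraph (starBox n m)).neighborSet z).ncard) :
    z ∈ insert (.inl (0, 0)) (.inr '' (starBox n m).edgesAt (0, 0)) := by
  rcases z with x | ⟨e, he⟩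
  · by_cases hx : x = (0, 0)
    · exact .inl (congrArg Sum.inl hx)
    · rw [ncard_neighborSet_totalGraph_inl] at hz
      have := ncard_neighborSet_starBox_le hn hmn hx
      omega
  · by_cases h₀ : (0, 0) ∈ e
    · exact .inr ⟨_, h₀, rfl⟩
    · induction e using Sym2.inductionOn with | _ x y => ?_
      rw [ncard_neighborSet_totalGraph_inr _ he] at hz
      have := ncard_neighborSet_starBox_add_le (x := x) (y := y) hmn he
        (by rintro rfl; simp at h₀) (by rintro rfl; simp at h₀)
      omega

end StarBox

theorem mDegree_totalGraph_boxProd_star_small (n m : ℕ) (hm : 3 ≤ m) (hmn : m ≤ n)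
    (h : n ≤ 2 * (m - 1)) :
    IsGreatest (mDegreeSet (totalGraph ((_root_.starGraph n).boxProd (_root_.starGraph m)))) (2 * n + 3) := by
  have hhub : ((starBox n m).edgesAt (0, 0)).ncard = n + m := by
    rw [ncard_edgesAt, ncard_neighborSet_starBox, if_pos rfl, if_pos rfl]
  constructor
  · refine mem_mDegreeSet_of_le_ncard
      (S := .inl '' Set.range (fun b => (0, b)) ∪ .inr '' (starBox n m).edgesAt (0, 0))
      (Set.toFinite _) ?_ ?_
    · rw [Set.ncard_union_eq Set.disjoint_image_inl_image_inr,
        Set.ncard_image_of_injective _ Sum.inl_injective,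
        Set.ncard_image_of_injective _ Sum.inr_injective, hhub,
        Set.ncard_range_of_injective (Prod.mk_right_injective 0), Nat.card_eq_fintype_card,
        Fintype.card_fin]
      omega
    · rintro _ (⟨_, ⟨b, rfl⟩, rfl⟩ | ⟨e, he, rfl⟩)
      · exact (le_ncard_neighborSet_totalGraph_starBox_inl (by omega) b).trans' (by omega)
      · exact (le_ncard_neighborSet_totalGraph_starBox_inr hmn he).trans' (by omega)
  · intro k hk
    by_contra! hlt
    have hle := le_ncard_of_mem_mDegreeSet
      (T := insert (.inl (0, 0)) (.inr '' (starBox n m).edgesAt (0, 0))) (Set.toFinite _) hk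
      fun z hz =>
        mem_of_le_ncard_neighborSet_totalGraph_starBox (by omega) hmn (hz.trans' (by omega))
    have hT := Set.ncard_insert_le (Sum.inl ((0, 0) : Fin (n + 1) × Fin (m + 1)))
      (Sum.inr '' (starBox n m).edgesAt (0, 0))
    rw [Set.ncard_image_of_injective _ Sum.inr_injective, hhub] at hT
    omega
end

section
/- For n, m ≥ 2, the m-degree of the cube (S_n □ S_m)^3 equals 2m + 2n. -/
open SimpleGraph

/-! Distances add up in a box product, and in a star they are at most 2, with equality exactly
between two distinct leaves. So in `(S_n □ S_m)^3` two distinct vertices are non-adjacent iff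
both coordinates are pairs of distinct leaves. A vertex with a central coordinate is therefore
universal, and a vertex `(a, b)` of two leaves misses exactly the `(n - 1)(m - 1)` vertices
`(a', b')` with `a' ∉ {0, a}` and `b' ∉ {0, b}`, so it has degree `2m + 2n - 1`. Hence all
`(n + 1)(m + 1) ≥ 2m + 2n` vertices have degree at least `2m + 2n - 1`, while only the
`n + m + 1 ≤ 2m + 2n` vertices with a central coordinate have degree at least `2m + 2n`. -/

namespace SimpleGraph

lemma dist_boxProd {α β : Type*} {G : SimpleGraph α} {H : SimpleGraph β} {x y : α × β}
    (h₁ : G.Reachable x.1 y.1) (h₂ : H.Reachable x.2 y.2) :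
    (G □ H).dist x y = G.dist x.1 y.1 + H.dist x.2 y.2 := by
  simp only [dist, edist_boxProd]
  exact ENat.toNat_add (edist_ne_top_iff_reachable.2 h₁) (edist_ne_top_iff_reachable.2 h₂)

variable {V : Type*} {r : V}

lemma dist_starGraph_center_le_one (v : V) : (starGraph r).dist v r ≤ 1 := by
  rcases eq_or_ne v r with rfl | hv
  · simp
  · exact (dist_eq_one_iff_adj.2 (starGraph_center_adj' hv.symm)).le

lemma dist_starGraph_le_two (u v : V) : (starGraph r).dist u v ≤ 2 :=
  calc (starGraph r).dist u v ≤ (starGraph r).dist u r + (starGraph r).dist r v :=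
        (connected_starGraph r).dist_triangle
    _ ≤ 1 + 1 := add_le_add (dist_starGraph_center_le_one u)
        (dist_comm.trans_le (dist_starGraph_center_le_one v))

lemma dist_starGraph_eq_two_iff {u v : V} :
    (starGraph r).dist u v = 2 ↔ u ≠ r ∧ v ≠ r ∧ u ≠ v := by
  constructor
  · intro h
    refine ⟨?_, ?_, ?_⟩ <;> rintro rfl
    · have := dist_starGraph_center_le_one (r := u) v
      rw [dist_comm] at this
      omega
    · have := dist_starGraph_center_le_one (r := v) u
      omega
    · simp at h
  · rintro ⟨hu, hv, huv⟩
    have h₀ := (connected_starGraph r).pos_dist_of_ne huv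
    have h₁ : (starGraph r).dist u v ≠ 1 := by
      rw [Ne, dist_eq_one_iff_adj, starGraph_adj]
      tauto
    have := dist_starGraph_le_two (r := r) u v
    omega

lemma setOf_dist_starGraph_center_eq_two (r : V) : {v | (starGraph r).dist r v = 2} = ∅ :=
  Set.eq_empty_of_forall_notMem fun _ h ↦ (dist_starGraph_eq_two_iff.1 h).1 rfl

lemma ncard_setOf_dist_starGraph_eq_two [Finite V] {u : V} (hu : u ≠ r) :
    {v | (starGraph r).dist u v = 2}.ncard = Nat.card V - 2 := by
  have : {v | (starGraph r).dist u v = 2} = {r, u}ᶜ := by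
    ext v
    simp only [dist_starGraph_eq_two_iff, Set.mem_ofPred_eq, Set.mem_compl_iff,
      Set.mem_insert_iff, Set.mem_singleton_iff, not_or]
    tauto
  rw [this, Set.ncard_compl, Set.ncard_pair hu.symm]

end SimpleGraph

lemma ncard_setOf_fst_eq_or_snd_eq {α β : Type*} [Finite α] [Finite β] (a : α) (b : β) :
    {x : α × β | x.1 = a ∨ x.2 = b}.ncard =
      Nat.card α * Nat.card β - (Nat.card α - 1) * (Nat.card β - 1) := by
  have : {x : α × β | x.1 = a ∨ x.2 = b} = ({a}ᶜ ×ˢ {b}ᶜ)ᶜ := by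
    ext x
    simp [or_iff_not_and_not]
  rw [this, Set.ncard_compl, Set.ncard_prod, Set.ncard_compl, Set.ncard_compl, Nat.card_prod,
    Set.ncard_singleton, Set.ncard_singleton]

section MDegree

variable {V : Type*} [Finite V] {G : SimpleGraph V} {k : ℕ}

lemma mem_mDegreeSet_of_forall_le_ncard (hk : k ≤ Nat.card V)
    (hdeg : ∀ v, k - 1 ≤ (G.neighborSet v).ncard) : k ∈ mDegreeSet G := by
  obtain ⟨S, -, hS⟩ :=
    Set.exists_subset_card_eq (s := Set.univ) (n := k) (by rwa [Set.ncard_univ])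
  exact ⟨S, S.toFinite, hS, fun v _ ↦ hdeg v⟩

lemma le_of_mem_mDegreeSet (hk : {v | k ≤ (G.neighborSet v).ncard}.ncard ≤ k) {i : ℕ}
    (hi : i ∈ mDegreeSet G) : i ≤ k := by
  obtain ⟨S, -, rfl, hS⟩ := hi
  by_contra! hlt
  have hsub : S ⊆ {v | k ≤ (G.neighborSet v).ncard} :=
    fun v hv ↦ (Nat.le_sub_one_of_lt hlt).trans (hS v hv)
  exact ((Set.ncard_le_ncard hsub).trans hk).not_gt hlt

end MDegree

lemma graphPower_adj_iff {V : Type*} {G : SimpleGraph V} (hG : G.Connected) {p : ℕ} {u v : V} :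
    (graphPower G p).Adj u v ↔ u ≠ v ∧ G.dist u v ≤ p := by
  refine and_congr_left fun _ ↦ ⟨fun h ↦ ?_, hG.pos_dist_of_ne⟩
  rintro rfl
  simp at h

section CubeOfBoxProd

variable {α β : Type*} {G : SimpleGraph α} {H : SimpleGraph β}

lemma graphPower_three_boxProd_adj_iff (hG : G.Connected) (hH : H.Connected)
    (hG₂ : ∀ a b, G.dist a b ≤ 2) (hH₂ : ∀ a b, H.dist a b ≤ 2) {x y : α × β} :
    (graphPower (G □ H) 3).Adj x y ↔
      x ≠ y ∧ ¬ (G.dist x.1 y.1 = 2 ∧ H.dist x.2 y.2 = 2) := by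
  rw [graphPower_adj_iff (hG.boxProd hH), dist_boxProd (hG x.1 y.1) (hH x.2 y.2)]
  have := hG₂ x.1 y.1
  have := hH₂ x.2 y.2
  exact and_congr_right fun _ ↦ by omega

lemma neighborSet_graphPower_three_boxProd (hG : G.Connected) (hH : H.Connected)
    (hG₂ : ∀ a b, G.dist a b ≤ 2) (hH₂ : ∀ a b, H.dist a b ≤ 2) (x : α × β) :
    (graphPower (G □ H) 3).neighborSet x =
      (insert x ({a | G.dist x.1 a = 2} ×ˢ {b | H.dist x.2 b = 2}))ᶜ := by
  ext y
  simp only [mem_neighborSet, graphPower_three_boxProd_adj_iff hG hH hG₂ hH₂,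
    Set.mem_compl_iff, Set.mem_insert_iff, Set.mem_prod, Set.mem_ofPred_eq, not_or, eq_comm]

lemma ncard_neighborSet_graphPower_three_boxProd [Finite α] [Finite β] (hG : G.Connected)
    (hH : H.Connected) (hG₂ : ∀ a b, G.dist a b ≤ 2) (hH₂ : ∀ a b, H.dist a b ≤ 2)
    (x : α × β) :
    ((graphPower (G □ H) 3).neighborSet x).ncard = Nat.card α * Nat.card β -
      ({a | G.dist x.1 a = 2}.ncard * {b | H.dist x.2 b = 2}.ncard + 1) := by
  have hx : x ∉ {a | G.dist x.1 a = 2} ×ˢ {b | H.dist x.2 b = 2} := by simp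
  rw [neighborSet_graphPower_three_boxProd hG hH hG₂ hH₂, Set.ncard_compl,
    Set.ncard_insert_of_notMem hx, Set.ncard_prod, Nat.card_prod]

end CubeOfBoxProd

section CubeOfStars

variable {α β : Type*} [Finite α] [Finite β] {a : α} {b : β}

lemma ncard_neighborSet_cube_starGraph_boxProd (x : α × β) :
    ((graphPower (starGraph a □ starGraph b) 3).neighborSet x).ncard = Nat.card α * Nat.card β -
      ({u | (starGraph a).dist x.1 u = 2}.ncard * {v | (starGraph b).dist x.2 v = 2}.ncard + 1) :=
  ncard_neighborSet_graphPower_three_boxProd (connected_starGraph a) (connected_starGraph b)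
    dist_starGraph_le_two dist_starGraph_le_two x

lemma ncard_neighborSet_cube_starGraph_boxProd_of_center {x : α × β} (hx : x.1 = a ∨ x.2 = b) :
    ((graphPower (starGraph a □ starGraph b) 3).neighborSet x).ncard =
      Nat.card α * Nat.card β - 1 := by
  rw [ncard_neighborSet_cube_starGraph_boxProd]
  rcases hx with h | h <;> simp [h, setOf_dist_starGraph_center_eq_two]

lemma ncard_neighborSet_cube_starGraph_boxProd_of_ne_center {x : α × β} (h₁ : x.1 ≠ a)
    (h₂ : x.2 ≠ b) :
    ((graphPower (starGraph a □ starGraph b) 3).neighborSet x).ncard =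
      Nat.card α * Nat.card β - ((Nat.card α - 2) * (Nat.card β - 2) + 1) := by
  rw [ncard_neighborSet_cube_starGraph_boxProd, ncard_setOf_dist_starGraph_eq_two h₁,
    ncard_setOf_dist_starGraph_eq_two h₂]

end CubeOfStars

lemma ncard_neighborSet_cube_starGraph_zero_boxProd_of_ne_zero {n m : ℕ}
    {x : Fin (n + 1) × Fin (m + 1)} (h₁ : x.1 ≠ 0) (h₂ : x.2 ≠ 0) :
    ((graphPower (SimpleGraph.starGraph 0 □ SimpleGraph.starGraph 0) 3).neighborSet x).ncard =
      2 * m + 2 * n - 1 := by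
  obtain ⟨k, rfl⟩ : ∃ k, n = k + 1 :=
    ⟨n - 1, by have := x.1.isLt; have := Fin.pos_iff_ne_zero.2 h₁; omega⟩
  obtain ⟨l, rfl⟩ : ∃ l, m = l + 1 :=
    ⟨m - 1, by have := x.2.isLt; have := Fin.pos_iff_ne_zero.2 h₂; omega⟩
  rw [ncard_neighborSet_cube_starGraph_boxProd_of_ne_center h₁ h₂]
  simp only [Nat.card_eq_fintype_card, Fintype.card_fin]
  rw [show k + 1 + 1 - 2 = k by omega, show l + 1 + 1 - 2 = l by omega]
  ring_nf
  omega

theorem mDegree_cube_boxProd_star (n m : ℕ) (hn : 2 ≤ n) (hm : 2 ≤ m) :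
    IsGreatest (mDegreeSet (graphPower ((_root_.starGraph n).boxProd (_root_.starGraph m)) 3)) (2 * m + 2 * n) := by
  simp only [starGraph_eq_starGraph_zero]
  set G := graphPower
    (SimpleGraph.starGraph (0 : Fin (n + 1)) □ SimpleGraph.starGraph (0 : Fin (m + 1))) 3
  have hdeg : ∀ x, 2 * m + 2 * n - 1 ≤ (G.neighborSet x).ncard := by
    intro x
    by_cases hx : x.1 = 0 ∨ x.2 = 0
    · rw [ncard_neighborSet_cube_starGraph_boxProd_of_center hx]
      simp only [Nat.card_eq_fintype_card, Fintype.card_fin]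
      exact Nat.sub_le_sub_right (by nlinarith) 1
    · rw [not_or] at hx
      rw [ncard_neighborSet_cube_starGraph_zero_boxProd_of_ne_zero hx.1 hx.2]
  have hhigh : {x | 2 * m + 2 * n ≤ (G.neighborSet x).ncard}.ncard ≤ 2 * m + 2 * n :=
    calc _ ≤ {x : Fin (n + 1) × Fin (m + 1) | x.1 = 0 ∨ x.2 = 0}.ncard := by
          refine Set.ncard_le_ncard fun x hx ↦ by_contra fun h ↦ ?_
          simp only [Set.mem_ofPred_eq, not_or] at hx h
          rw [ncard_neighborSet_cube_starGraph_zero_boxProd_of_ne_zero h.1 h.2] at hx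
          omega
      _ = (n + 1) * (m + 1) - n * m := by simp [ncard_setOf_fst_eq_or_snd_eq]
      _ ≤ 2 * m + 2 * n := by
          rw [Nat.sub_le_iff_le_add]
          nlinarith
  refine ⟨mem_mDegreeSet_of_forall_le_ncard ?_ hdeg, fun _ ↦ le_of_mem_mDegreeSet hhigh⟩
  simp only [Nat.card_eq_fintype_card, Fintype.card_prod, Fintype.card_fin]
  nlinarith
end

section
/- The b-chromatic number of the rook graph K_3 □ K_3 equals 3; that is, K_3 □ K_3 admits no b-coloring with 4 colors. -/
open SimpleGraph

/-!
The coloring `(i, j) ↦ i + j` of `K₃ □ K₃` is a b-coloring with 3 colors. Conversely a b-vertex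
sees the other `k - 1` colors among its 4 neighbours, so `k ≤ 5`. For `k = 4, 5`, rename the
colors so that the first row reads `0 1 2`; in the rook graph a vertex is a b-vertex exactly when
its row and column together carry all colors, and an exhaustive search over the six remaining
cells shows that no proper completion has such a cell for every color.
-/

namespace IsBColoring

variable {V : Type*} {G : SimpleGraph V} {k : ℕ} {c : V → Fin k}

theorem perm_comp (h : IsBColoring G k c) (σ : Equiv.Perm (Fin k)) : IsBColoring G k (σ ∘ c) := by
  refine ⟨fun u v huv hσ => h.1 u v huv (σ.injective hσ), fun i => ?_⟩
  obtain ⟨v, hv, hcover⟩ := h.2 (σ.symm i)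
  refine ⟨v, by simp [hv], fun j hj => ?_⟩
  obtain ⟨u, huv, hu⟩ := hcover (σ.symm j) (σ.symm.injective.ne hj)
  exact ⟨u, huv, by simp [hu]⟩

theorem le_maxDegree_add_one [Fintype V] [DecidableRel G.Adj] (h : IsBColoring G k c) :
    k ≤ G.maxDegree + 1 := by
  rcases Nat.eq_zero_or_pos k with rfl | hk
  · exact Nat.zero_le _
  obtain ⟨v, -, hcover⟩ := h.2 ⟨0, hk⟩
  have hsub : Finset.univ.erase ⟨0, hk⟩ ⊆ (G.neighborFinset v).image c := fun j hj => by
    obtain ⟨u, huv, hu⟩ := hcover j (Finset.ne_of_mem_erase hj)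
    exact Finset.mem_image.2 ⟨u, (G.mem_neighborFinset _ _).2 huv, hu⟩
  have hle : k - 1 ≤ G.degree v := by
    simpa using (Finset.card_le_card hsub).trans Finset.card_image_le
  have := G.degree_le_maxDegree v
  omega

end IsBColoring

instance {α β : Type*} [DecidableEq α] [DecidableEq β] (G : SimpleGraph α) (H : SimpleGraph β)
    [DecidableRel G.Adj] [DecidableRel H.Adj] : DecidableRel (G □ H).Adj :=
  fun _ _ => decidable_of_iff' _ boxProd_adj

abbrev rookGraph (n m : ℕ) : SimpleGraph (Fin n × Fin m) :=
  (⊤ : SimpleGraph (Fin n)) □ (⊤ : SimpleGraph (Fin m))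

theorem rookGraph_maxDegree_le (n m : ℕ) : (rookGraph n m).maxDegree ≤ (n - 1) + (m - 1) := by
  refine maxDegree_le_of_forall_degree_le _ _ fun x => ?_
  rw [degree_boxProd]
  simp

theorem isBColoring_rookGraph_add (n : ℕ) [NeZero n] :
    IsBColoring (rookGraph n n) n (fun p => p.1 + p.2) := by
  refine ⟨?_, fun x => ⟨(0, x), zero_add x, fun y hy => ⟨(0, y), ?_, zero_add y⟩⟩⟩
  · rintro ⟨i, j⟩ ⟨i', j'⟩ h
    rcases boxProd_adj.1 h with ⟨hi, rfl⟩ | ⟨hj, rfl⟩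
    · exact fun he => hi (add_right_cancel he)
    · exact fun he => hj (add_left_cancel he)
  · exact boxProd_adj_right.2 hy.symm

/-- The b-vertex condition of a rook-graph coloring, read on its matrix: every color occurs at a
cell whose row and column together carry every color. -/
def RookBCondition {n m k : ℕ} (M : Fin n → Fin m → Fin k) : Prop :=
  ∀ x, ∃ i j, M i j = x ∧ ∀ y, (∃ j', M i j' = y) ∨ ∃ i', M i' j = y

instance {n m k : ℕ} (M : Fin n → Fin m → Fin k) : Decidable (RookBCondition M) := by
  unfold RookBCondition; infer_instance

theorem IsBColoring.rookBCondition {n m k : ℕ} {c : Fin n × Fin m → Fin k}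
    (h : IsBColoring (rookGraph n m) k c) : RookBCondition fun i j => c (i, j) := by
  intro x
  obtain ⟨⟨i, j⟩, hx, hcover⟩ := h.2 x
  refine ⟨i, j, hx, fun y => ?_⟩
  by_cases hy : y = x
  · exact Or.inl ⟨j, hx.trans hy.symm⟩
  obtain ⟨⟨i', j'⟩, hadj, hu⟩ := hcover y hy
  rcases boxProd_adj.1 hadj with ⟨-, rfl⟩ | ⟨-, rfl⟩
  · exact Or.inr ⟨i', hu⟩
  · exact Or.inl ⟨j', hu⟩

-- The properness constraints are interleaved with the quantifiers so that the exhaustive search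
-- discards an improper partial grid as soon as its last cell is placed.
theorem not_rookBCondition_of_firstRow {n : ℕ} (hn : n ≤ 1) :
    ∀ a : Fin (n + 4), a ≠ 0 → ∀ b, b ≠ 1 → b ≠ a → ∀ c, c ≠ 2 → c ≠ a → c ≠ b →
    ∀ d, d ≠ 0 → d ≠ a → ∀ e, e ≠ 1 → e ≠ b → e ≠ d → ∀ f, f ≠ 2 → f ≠ c → f ≠ d → f ≠ e →
    ¬ RookBCondition ![![0, 1, 2], ![a, b, c], ![d, e, f]] := by
  interval_cases n <;> decide +kernel

theorem not_isBColoring_rookGraph_three_of_firstRow {n : ℕ} (hn : n ≤ 1)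
    {c : Fin 3 × Fin 3 → Fin (n + 4)} (hc : IsBColoring (rookGraph 3 3) (n + 4) c)
    (h0 : c (0, 0) = 0) (h1 : c (0, 1) = 1) (h2 : c (0, 2) = 2) : False := by
  have hM : (fun i j => c (i, j)) =
      ![![0, 1, 2], ![c (1, 0), c (1, 1), c (1, 2)], ![c (2, 0), c (2, 1), c (2, 2)]] := by
    ext i j
    fin_cases i <;> fin_cases j <;> simp [h0, h1, h2]
  refine not_rookBCondition_of_firstRow hn _ ?_ _ ?_ ?_ _ ?_ ?_ ?_ _ ?_ ?_ _ ?_ ?_ ?_ _ ?_ ?_ ?_ ?_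
    (hM ▸ hc.rookBCondition)
  -- once `0 1 2` are read back as the first row, every side condition is properness along an edge
  all_goals first | rw [← h0] | rw [← h1] | rw [← h2] | skip
  all_goals exact hc.1 _ _ (by decide)

theorem not_hasBColoring_rookGraph_three {k : ℕ} (hk4 : 4 ≤ k) (hk5 : k ≤ 5) :
    ¬ HasBColoring (rookGraph 3 3) k := by
  obtain ⟨n, rfl⟩ : ∃ n, k = n + 4 := ⟨k - 4, by omega⟩
  rintro ⟨c, hc⟩
  have hrow : Function.Injective fun j => c (0, j) := fun j j' h => by
    by_contra hne
    exact hc.1 _ _ (boxProd_adj_right.2 hne) h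
  obtain ⟨σ, hσ⟩ := Equiv.Perm.exists_extending_pair _ (Fin.castLE (by omega)) hrow
    (Fin.castLE_injective _)
  exact not_isBColoring_rookGraph_three_of_firstRow (by omega) (hc.perm_comp σ)
    (Fin.ext (by simpa using congrArg Fin.val (hσ 0)))
    (Fin.ext (by simpa using congrArg Fin.val (hσ 1)))
    (Fin.ext (by
      simpa [Nat.mod_eq_of_lt (show 2 < n + 4 by omega)] using congrArg Fin.val (hσ 2)))

theorem rook_3_3_bChromatic :
    IsGreatest
      (bChromaticSet ((⊤ : SimpleGraph (Fin 3)).boxProd (⊤ : SimpleGraph (Fin 3)))) 3 ∧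
    ¬ HasBColoring ((⊤ : SimpleGraph (Fin 3)).boxProd (⊤ : SimpleGraph (Fin 3))) 4 := by
  refine ⟨⟨⟨_, isBColoring_rookGraph_add 3⟩, fun k ⟨c, hc⟩ => ?_⟩,
    not_hasBColoring_rookGraph_three le_rfl (by norm_num)⟩
  have hk : k ≤ 5 :=
    hc.le_maxDegree_add_one.trans (Nat.add_le_add_right (rookGraph_maxDegree_le 3 3) 1)
  by_contra! h3
  exact not_hasBColoring_rookGraph_three h3 hk ⟨c, hc⟩
end
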